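/- For all integers k ≥ 1 and m with 1 ≤ m ≤ k, and for each sign ε ∈ {+1, −1}, the polynomial A_ε := k·P̃ₖᵐ + ε·(k+m)·P̃ₖ₋₁ᵐ + ((k+m−1)(k+m)/2)·P̃ₖ₋₁ᵐ⁻¹ is divisible by (1 + ε·X) in ℝ[X], and its degree is at most k − m. (Equivalently, k P̃ₖᵐ ± (k+m) P̃ₖ₋₁ᵐ + ½(k+m−1)(k+m) P̃ₖ₋₁ᵐ⁻¹ = (1 ± x)·Q±ₖₘ for polynomials Q±ₖₘ of degree at most k − m − 1; this is the key identity used to prove smoothness of the 1-form ω at fixed points of the axial Killing field.) -/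

import Mathlib

open Polynomial

/-- The `n`-th Legendre polynomial, via Rodrigues' formula
`Pₙ = (1/(2ⁿ n!)) Dⁿ((X² − 1)ⁿ)`. -/
noncomputable def legendreP (n : ℕ) : Polynomial ℝ :=
  C (1 / (2 ^ n * (n.factorial : ℝ))) * (derivative^[n] ((X ^ 2 - 1) ^ n))

/-- The polynomial part `P̃ₙᵐ = (−1)ᵐ Dᵐ(Pₙ)` of the associated Legendre function
`Pₙᵐ(x) = (−1)ᵐ (1 − x²)^{m/2} (d/dx)ᵐ Pₙ(x)`. -/
noncomputable def assocLegendreP (n m : ℕ) : Polynomial ℝ :=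
  (-1 : Polynomial ℝ) ^ m * derivative^[m] (legendreP n)

private lemma natDegree_legendreP (n : ℕ) : (legendreP n).natDegree ≤ n := by
  unfold legendreP
  refine (natDegree_C_mul_le _ _).trans ?_
  refine (natDegree_iterate_derivative _ _).trans ?_
  have h1 : (((X : ℝ[X]) ^ 2 - 1) ^ n).natDegree ≤ 2 * n := by
    refine natDegree_pow_le.trans ?_
    have h2 : ((X : ℝ[X]) ^ 2 - 1).natDegree ≤ 2 := by
      refine (natDegree_sub_le _ _).trans ?_
      simp [natDegree_X_pow]
    calc n * ((X : ℝ[X]) ^ 2 - 1).natDegree ≤ n * 2 := Nat.mul_le_mul_left n h2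
      _ = 2 * n := by ring
  omega

private lemma iterate_derivative_legendreP (n m : ℕ) :
    derivative^[m] (legendreP n)
      = C (1 / (2 ^ n * (n.factorial : ℝ))) *
          derivative^[n + m] ((X - C 1) ^ n * (X + C 1) ^ n) := by
  have h : ((X : ℝ[X]) ^ 2 - 1) ^ n = (X - C 1) ^ n * (X + C 1) ^ n := by
    rw [← mul_pow]; congr 1; simp; ring
  rw [Nat.add_comm n m, legendreP, h, iterate_derivative_C_mul,
    ← Function.iterate_add_apply]

private lemma eval_one_iter (n m : ℕ) :
    (derivative^[m] (legendreP n)).eval 1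
      = ((n + m).choose m : ℝ) * (n.descFactorial m : ℝ) / 2 ^ m := by
  rcases le_or_gt m n with h | h
  · rw [iterate_derivative_legendreP, iterate_derivative_mul]
    simp only [iterate_derivative_X_sub_pow, iterate_derivative_X_add_pow,
      eval_mul, eval_finset_sum, eval_smul, smul_eq_mul, nsmul_eq_mul, eval_pow,
      eval_sub, eval_add, eval_X, eval_C]
    rw [Finset.sum_eq_single_of_mem m (Finset.mem_range.mpr (by omega))]
    · have h0 : n + m - m = n := by omega
      have h1 : n - n = 0 := by omega
      rw [h0, h1, Nat.descFactorial_self]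
      have hf : ((n.factorial : ℝ)) ≠ 0 := Nat.cast_ne_zero.mpr n.factorial_ne_zero
      have h2 : (2 : ℝ) ^ n = 2 ^ m * 2 ^ (n - m) := by
        rw [← pow_add]; congr 1; omega
      rw [h2]
      norm_num
      field_simp
    · intro j hj hjm
      rcases lt_or_gt_of_ne hjm with hlt | hgt
      · have : n.descFactorial (n + m - j) = 0 := Nat.descFactorial_of_lt (by omega)
        rw [this]
        norm_num
      · have : ((1 : ℝ) - 1) ^ (n - (n + m - j)) = 0 := by
          rw [sub_self, zero_pow]
          have := Finset.mem_range.mp hj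
          omega
        rw [this]
        ring
  · rw [iterate_derivative_eq_zero (lt_of_le_of_lt (natDegree_legendreP n) h),
      Nat.descFactorial_of_lt h]
    simp

private lemma eval_negOne_iter (n m : ℕ) :
    (derivative^[m] (legendreP n)).eval (-1)
      = (-1) ^ (n - m) *
          (((n + m).choose m : ℝ) * (n.descFactorial m : ℝ) / 2 ^ m) := by
  rcases le_or_gt m n with h | h
  · rw [iterate_derivative_legendreP, iterate_derivative_mul]
    simp only [iterate_derivative_X_sub_pow, iterate_derivative_X_add_pow,
      eval_mul, eval_finset_sum, eval_smul, smul_eq_mul, nsmul_eq_mul, eval_pow,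
      eval_sub, eval_add, eval_X, eval_C]
    rw [Finset.sum_eq_single_of_mem n (Finset.mem_range.mpr (by omega))]
    · have h0 : n + m - n = m := by omega
      have h1 : n - n = 0 := by omega
      rw [h0, h1, Nat.descFactorial_self]
      have h3 : (n + m).choose n = (n + m).choose m := by
        have := Nat.choose_symm (show m ≤ n + m by omega)
        rwa [Nat.add_sub_cancel] at this
      rw [h3]
      have hf : ((n.factorial : ℝ)) ≠ 0 := Nat.cast_ne_zero.mpr n.factorial_ne_zero
      have h2 : (2 : ℝ) ^ n = 2 ^ m * 2 ^ (n - m) := by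
        rw [← pow_add]; congr 1; omega
      have h4 : ((-1 : ℝ) - 1) ^ (n - m) = (-1) ^ (n - m) * 2 ^ (n - m) := by
        rw [show (-1 - 1 : ℝ) = (-1) * 2 by norm_num, mul_pow]
      rw [h2, h4]
      norm_num
      field_simp
    · intro j hj hjm
      rcases lt_or_gt_of_ne hjm with hlt | hgt
      · have : ((-1 : ℝ) + 1) ^ (n - j) = 0 := by
          rw [neg_add_cancel, zero_pow]; omega
        rw [this]
        ring
      · have : n.descFactorial j = 0 := Nat.descFactorial_of_lt (by omega)
        rw [this]
        norm_num
  · rw [iterate_derivative_eq_zero (lt_of_le_of_lt (natDegree_legendreP n) h),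
      Nat.descFactorial_of_lt h]
    simp

private lemma cast_dF {n j : ℕ} (h : j ≤ n) :
    (n.descFactorial j : ℝ) = (n.factorial : ℝ) / ((n - j).factorial : ℝ) := by
  rw [eq_div_iff (Nat.cast_ne_zero.mpr (Nat.factorial_ne_zero _))]
  exact_mod_cast (by rw [mul_comm]; exact Nat.factorial_mul_descFactorial h :
    n.descFactorial j * (n - j).factorial = n.factorial)

private lemma helper1 (e d : ℕ) :
    ((e : ℝ) + d + 2) * ((2 * e + d + 3).choose (e + 1) : ℝ)
        * ((e + d + 2).descFactorial (e + 1) : ℝ) / 2 ^ (e + 1)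
      = (2 * (e : ℝ) + d + 3) * ((2 * e + d + 2).choose (e + 1) : ℝ)
          * ((e + d + 1).descFactorial (e + 1) : ℝ) / 2 ^ (e + 1)
        + (2 * (e : ℝ) + d + 2) * (2 * (e : ℝ) + d + 3) / 2
            * ((2 * e + d + 1).choose e : ℝ)
            * ((e + d + 1).descFactorial e : ℝ) / 2 ^ e := by
  rw [Nat.cast_choose ℝ (show e + 1 ≤ 2 * e + d + 3 by omega),
    Nat.cast_choose ℝ (show e + 1 ≤ 2 * e + d + 2 by omega),
    Nat.cast_choose ℝ (show e ≤ 2 * e + d + 1 by omega),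
    cast_dF (show e + 1 ≤ e + d + 2 by omega),
    cast_dF (show e + 1 ≤ e + d + 1 by omega),
    cast_dF (show e ≤ e + d + 1 by omega)]
  simp only [show 2 * e + d + 3 - (e + 1) = e + d + 2 from by omega,
    show 2 * e + d + 2 - (e + 1) = e + d + 1 from by omega,
    show 2 * e + d + 1 - e = e + d + 1 from by omega,
    show e + d + 2 - (e + 1) = d + 1 from by omega,
    show e + d + 1 - (e + 1) = d from by omega,
    show e + d + 1 - e = d + 1 from by omega]
  have f1 : ((2 * e + d + 3).factorial : ℝ)
      = (2 * e + d + 3) * ((2 * e + d + 2) * ((2 * e + d + 1).factorial)) := by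
    rw [show 2 * e + d + 3 = (2 * e + d + 2) + 1 from by omega, Nat.factorial_succ,
      show 2 * e + d + 2 = (2 * e + d + 1) + 1 from by omega, Nat.factorial_succ]
    push_cast; ring
  have f3 : ((e + d + 2).factorial : ℝ) = (e + d + 2) * ((e + d + 1).factorial) := by
    rw [show e + d + 2 = (e + d + 1) + 1 from by omega, Nat.factorial_succ]; push_cast; ring
  have f2 : ((2 * e + d + 2).factorial : ℝ)
      = (2 * e + d + 2) * ((2 * e + d + 1).factorial) := by
    rw [show 2 * e + d + 2 = (2 * e + d + 1) + 1 from by omega, Nat.factorial_succ]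
    push_cast; ring
  have f4 : ((e + 1).factorial : ℝ) = (e + 1) * (e.factorial) := by
    rw [Nat.factorial_succ]; push_cast; ring
  have f5 : ((d + 1).factorial : ℝ) = (d + 1) * (d.factorial) := by
    rw [Nat.factorial_succ]; push_cast; ring
  rw [f1, f2, f3, f4, f5]
  have hA : ((2 * e + d + 1).factorial : ℝ) ≠ 0 := Nat.cast_ne_zero.mpr (Nat.factorial_ne_zero _)
  have hB : ((e + d + 1).factorial : ℝ) ≠ 0 := Nat.cast_ne_zero.mpr (Nat.factorial_ne_zero _)
  have hE : ((e.factorial : ℝ)) ≠ 0 := Nat.cast_ne_zero.mpr (Nat.factorial_ne_zero _)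
  have hD : ((d.factorial : ℝ)) ≠ 0 := Nat.cast_ne_zero.mpr (Nat.factorial_ne_zero _)
  have h2 : ((2 : ℝ)) ^ e ≠ 0 := by positivity
  have he1 : ((e : ℝ)) + 1 ≠ 0 := by positivity
  have hd1 : ((d : ℝ)) + 1 ≠ 0 := by positivity
  field_simp
  ring

private lemma helper2 (e : ℕ) :
    ((e : ℝ) + 1) * ((2 * e + 2).choose (e + 1) : ℝ)
        * ((e + 1).descFactorial (e + 1) : ℝ) / 2 ^ (e + 1)
      = (2 * (e : ℝ) + 1) * (2 * (e : ℝ) + 2) / 2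
          * ((2 * e).choose e : ℝ) * ((e.descFactorial e : ℕ) : ℝ) / 2 ^ e := by
  rw [Nat.cast_choose ℝ (show e + 1 ≤ 2 * e + 2 by omega),
    Nat.cast_choose ℝ (show e ≤ 2 * e by omega),
    Nat.descFactorial_self, Nat.descFactorial_self]
  simp only [show 2 * e + 2 - (e + 1) = e + 1 from by omega,
    show 2 * e - e = e from by omega]
  have f1 : ((2 * e + 2).factorial : ℝ)
      = (2 * e + 2) * ((2 * e + 1) * ((2 * e).factorial)) := by
    rw [show 2 * e + 2 = (2 * e + 1) + 1 from by omega, Nat.factorial_succ,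
      show 2 * e + 1 = (2 * e) + 1 from by omega, Nat.factorial_succ]
    push_cast; ring
  have f4 : ((e + 1).factorial : ℝ) = (e + 1) * (e.factorial) := by
    rw [Nat.factorial_succ]; push_cast; ring
  rw [f1, f4]
  have hA : ((2 * e).factorial : ℝ) ≠ 0 := Nat.cast_ne_zero.mpr (Nat.factorial_ne_zero _)
  have hE : ((e.factorial : ℝ)) ≠ 0 := Nat.cast_ne_zero.mpr (Nat.factorial_ne_zero _)
  have h2 : ((2 : ℝ)) ^ e ≠ 0 := by positivity
  have he1 : ((e : ℝ)) + 1 ≠ 0 := by positivity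
  field_simp
  ring

private lemma root_lemma (k m : ℕ) (hk : 1 ≤ k) (hm : 1 ≤ m) (hmk : m ≤ k)
    (ε : ℝ) (hε : ε = 1 ∨ ε = -1) :
    (C (k : ℝ) * assocLegendreP k m
      + C (ε * ((k : ℝ) + m)) * assocLegendreP (k - 1) m
      + C (((k : ℝ) + m - 1) * ((k : ℝ) + m) / 2)
          * assocLegendreP (k - 1) (m - 1)).eval (-ε) = 0 := by
  obtain ⟨e, rfl⟩ : ∃ e, m = e + 1 := ⟨m - 1, by omega⟩
  rcases Nat.lt_or_ge (e + 1) k with hlt | hge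
  · obtain ⟨d, rfl⟩ : ∃ d, k = e + d + 2 := ⟨k - e - 2, by omega⟩
    rcases hε with rfl | rfl
    · simp only [assocLegendreP, eval_add, eval_mul, eval_C, eval_pow, eval_neg, eval_one,
        show (e + d + 2 - 1 : ℕ) = e + d + 1 from by omega,
        show (e + 1 - 1 : ℕ) = e from by omega]
      rw [eval_negOne_iter (e + d + 2) (e + 1), eval_negOne_iter (e + d + 1) (e + 1),
        eval_negOne_iter (e + d + 1) e]
      simp only [show (e + d + 2) + (e + 1) = 2 * e + d + 3 from by omega,
        show (e + d + 1) + (e + 1) = 2 * e + d + 2 from by omega,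
        show (e + d + 1) + e = 2 * e + d + 1 from by omega,
        show (e + d + 2) - (e + 1) = d + 1 from by omega,
        show (e + d + 1) - (e + 1) = d from by omega,
        show (e + d + 1) - e = d + 1 from by omega]
      push_cast
      linear_combination ((-1 : ℝ) ^ (e + d)) * helper1 e d
    · simp only [neg_neg]
      simp only [assocLegendreP, eval_add, eval_mul, eval_C, eval_pow, eval_neg, eval_one,
        show (e + d + 2 - 1 : ℕ) = e + d + 1 from by omega,
        show (e + 1 - 1 : ℕ) = e from by omega]
      rw [eval_one_iter (e + d + 2) (e + 1), eval_one_iter (e + d + 1) (e + 1),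
        eval_one_iter (e + d + 1) e]
      simp only [show (e + d + 2) + (e + 1) = 2 * e + d + 3 from by omega,
        show (e + d + 1) + (e + 1) = 2 * e + d + 2 from by omega,
        show (e + d + 1) + e = 2 * e + d + 1 from by omega]
      push_cast
      linear_combination ((-1 : ℝ) ^ (e + 1)) * helper1 e d
  · have hke : k = e + 1 := by omega
    subst hke
    rcases hε with rfl | rfl
    · simp only [assocLegendreP, eval_add, eval_mul, eval_C, eval_pow, eval_neg, eval_one,
        show (e + 1 - 1 : ℕ) = e from by omega]
      rw [eval_negOne_iter (e + 1) (e + 1), eval_negOne_iter e (e + 1),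
        eval_negOne_iter e e]
      simp only [show (e + 1) + (e + 1) = 2 * e + 2 from by omega,
        show e + e = 2 * e from by omega,
        show (e + 1) - (e + 1) = 0 from by omega,
        show e - (e + 1) = 0 from by omega,
        show e - e = 0 from by omega,
        show (e.descFactorial (e + 1)) = 0 from Nat.descFactorial_of_lt (by omega)]
      push_cast
      linear_combination ((-1 : ℝ) ^ (e + 1)) * helper2 e
    · simp only [neg_neg]
      simp only [assocLegendreP, eval_add, eval_mul, eval_C, eval_pow, eval_neg, eval_one,
        show (e + 1 - 1 : ℕ) = e from by omega]
      rw [eval_one_iter (e + 1) (e + 1), eval_one_iter e (e + 1), eval_one_iter e e]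
      simp only [show (e + 1) + (e + 1) = 2 * e + 2 from by omega,
        show e + e = 2 * e from by omega,
        show (e.descFactorial (e + 1)) = 0 from Nat.descFactorial_of_lt (by omega)]
      push_cast
      linear_combination ((-1 : ℝ) ^ (e + 1)) * helper2 e

/-- **Key divisibility identity for smoothness of `ω` at fixed points.**
For `1 ≤ m ≤ k` and sign `ε = ±1`, the polynomial
`k P̃ₖᵐ + ε (k+m) P̃ₖ₋₁ᵐ + ½(k+m−1)(k+m) P̃ₖ₋₁ᵐ⁻¹` is divisible by `1 + ε X`
and has degree at most `k − m`; i.e. it equals `(1 ± x) Q±ₖₘ` with `deg Q±ₖₘ ≤ k − m − 1`. -/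
theorem assocLegendre_divisibility
    (k m : ℕ) (hk : 1 ≤ k) (hm : 1 ≤ m) (hmk : m ≤ k)
    (ε : ℝ) (hε : ε = 1 ∨ ε = -1) :
    (1 + C ε * X) ∣
        (C (k : ℝ) * assocLegendreP k m
          + C (ε * ((k : ℝ) + m)) * assocLegendreP (k - 1) m
          + C (((k : ℝ) + m - 1) * ((k : ℝ) + m) / 2) * assocLegendreP (k - 1) (m - 1))
      ∧ (C (k : ℝ) * assocLegendreP k m
          + C (ε * ((k : ℝ) + m)) * assocLegendreP (k - 1) m
          + C (((k : ℝ) + m - 1) * ((k : ℝ) + m) / 2)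
              * assocLegendreP (k - 1) (m - 1)).degree ≤ (k - m : ℕ) := by
  have hε2 : ε * ε = 1 := by rcases hε with rfl | rfl <;> norm_num
  constructor
  · obtain ⟨q, hq⟩ := dvd_iff_isRoot.mpr (root_lemma k m hk hm hmk ε hε)
    refine ⟨C ε * q, ?_⟩
    rw [hq, map_neg]
    have hC : C ε * C ε = 1 := by rw [← C_mul, hε2, C_1]
    linear_combination (-(X * q)) * hC
  · rw [← natDegree_le_iff_degree_le]
    have key : ∀ n j : ℕ, (assocLegendreP n j).natDegree ≤ n - j := by
      intro n j
      unfold assocLegendreP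
      have h : ((-1 : ℝ[X])) = C (-1) := by simp
      rw [h, ← C_pow]
      refine (natDegree_C_mul_le _ _).trans ?_
      refine (natDegree_iterate_derivative _ _).trans ?_
      exact Nat.sub_le_sub_right (natDegree_legendreP n) j
    refine (natDegree_add_le _ _).trans (max_le ((natDegree_add_le _ _).trans (max_le ?_ ?_)) ?_)
    · exact (natDegree_C_mul_le _ _).trans (key k m)
    · exact (natDegree_C_mul_le _ _).trans ((key (k - 1) m).trans (by omega))
    · exact (natDegree_C_mul_le _ _).trans ((key (k - 1) (m - 1)).trans (by omega))
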